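/- Let G be a finite simple graph and y a vertex of G. Then the colon ideal satisfies I_3(G) : y = (uv : u ≠ v ∈ N(y)) + (uw : u ∈ N(y), w ∈ N(u) \ N[y]) + I_3(G_2), where G_2 is the induced subgraph of G on V(G) \ N[y]. -/

import Mathlib

noncomputable section

namespace PathIdeals

open MvPolynomial

variable {k : Type*} [Field k] {V : Type*} [Fintype V] [LinearOrder V]

/-- Transport a graded piece along an equality of degrees. -/
def castLinear (k : Type*) [Field k] (N : ℕ → Type*) [∀ a, AddCommGroup (N a)]
    [∀ a, Module k (N a)] {a b : ℕ} (h : a = b) : N a →ₗ[k] N b := by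
  subst h; exact LinearMap.id

/-- The Koszul-type differential computing `Tor^S(k, N)` for a graded module `N` over
`S = k[x_v : v ∈ V]` given by its graded pieces `N a` together with the multiplication maps
`x_v ⬝ : N a → N (a+1)`.  The map goes from homological degree `i`, internal degree `j`
(so coefficients in `N (j - i)`) to homological degree `i - 1`. -/
def koszulMap (k : Type*) [Field k] {V : Type*} [Fintype V] [LinearOrder V]
    (N : ℕ → Type*) [∀ a, AddCommGroup (N a)] [∀ a, Module k (N a)]
    (mul : V → ∀ a : ℕ, N a →ₗ[k] N (a + 1)) (i j : ℕ) :
    ({s : Finset V // s.card = i} →₀ N (j - i)) →ₗ[k]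
      ({s : Finset V // s.card = i - 1} →₀ N (j - (i - 1))) :=
  if h : 1 ≤ i ∧ i ≤ j then
    Finsupp.lsum k fun s : {s : Finset V // s.card = i} =>
      ∑ v ∈ s.1.attach,
        ((-1 : k) ^ (s.1.filter (fun w => w < v.1)).card) •
          ((Finsupp.lsingle
              (⟨s.1.erase v.1, by rw [Finset.card_erase_of_mem v.2, s.2]⟩ :
                {s : Finset V // s.card = i - 1})).comp
            ((castLinear k N (by omega : (j - i) + 1 = j - (i - 1))).comp (mul v.1 (j - i))))
  else 0

/-- The `(i,j)`-th graded Betti number `β_{i,j} = dim_k Tor_i^S(k, N)_j` of the graded module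
`N`, computed as the dimension of the homology of the Koszul complex tensored with `N`.
(For modules generated in non-negative degrees, such as ideals and their quotient rings,
the Betti numbers vanish when `j < i`.) -/
def bettiAux (k : Type*) [Field k] {V : Type*} [Fintype V] [LinearOrder V]
    (N : ℕ → Type*) [∀ a, AddCommGroup (N a)] [∀ a, Module k (N a)]
    (mul : V → ∀ a : ℕ, N a →ₗ[k] N (a + 1)) (i j : ℕ) : ℕ :=
  if j < i then 0
  else
    Module.finrank k
      (↥(LinearMap.ker (koszulMap k N mul i j)) ⧸
        Submodule.comap (LinearMap.ker (koszulMap k N mul i j)).subtype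
          (LinearMap.range (koszulMap k N mul (i + 1) j)))

/-- The degree-`a` graded piece of a homogeneous ideal `I ⊆ S`, as a `k`-subspace. -/
def idealPiece (k : Type*) [Field k] {V : Type*} (I : Ideal (MvPolynomial V k)) (a : ℕ) :
    Submodule k (MvPolynomial V k) :=
  Submodule.restrictScalars k I ⊓ homogeneousSubmodule V k a

/-- Multiplication by the variable `x_v` on graded pieces of an ideal. -/
def idealMul {k : Type*} [Field k] {V : Type*} (I : Ideal (MvPolynomial V k)) (v : V) (a : ℕ) :
    ↥(idealPiece k I a) →ₗ[k] ↥(idealPiece k I (a + 1)) where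
  toFun f := ⟨X v * f.1, by
    obtain ⟨h1, h2⟩ := Submodule.mem_inf.mp f.2
    refine Submodule.mem_inf.mpr ⟨I.mul_mem_left _ h1, ?_⟩
    rw [mem_homogeneousSubmodule] at h2 ⊢
    simpa [add_comm] using (isHomogeneous_X k v).mul h2⟩
  map_add' f g := by ext; simp [mul_add]
  map_smul' c f := by ext; simp [mul_smul_comm]

/-- The `(i,j)`-th graded Betti number `β_{i,j}(I) = dim_k Tor_i^S(k, I)_j` of a homogeneous
ideal `I` of the polynomial ring `S = k[x_v : v ∈ V]`. -/
def gradedBetti (k : Type*) [Field k] {V : Type*} [Fintype V] [LinearOrder V]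
    (I : Ideal (MvPolynomial V k)) (i j : ℕ) : ℕ :=
  bettiAux k (fun a => ↥(idealPiece k I a)) (idealMul I) i j

/-- The projective dimension `pd(I) = sup { i | β_{i,j}(I) ≠ 0 for some j }` of a homogeneous
ideal of the polynomial ring. -/
def pdIdeal (k : Type*) [Field k] {V : Type*} [Fintype V] [LinearOrder V]
    (I : Ideal (MvPolynomial V k)) : ℕ :=
  sSup {i | ∃ j, gradedBetti k I i j ≠ 0}

/-- The Castelnuovo–Mumford regularity `reg(I) = sup { j - i | β_{i,j}(I) ≠ 0 }` of a
homogeneous ideal of the polynomial ring. -/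
def regIdeal (k : Type*) [Field k] {V : Type*} [Fintype V] [LinearOrder V]
    (I : Ideal (MvPolynomial V k)) : ℕ :=
  sSup {r | ∃ i, gradedBetti k I i (i + r) ≠ 0}

/-- Multiplication by `x_v` on the (constant) ungraded module underlying an ideal. -/
def idealMulTotal {k : Type*} [Field k] {V : Type*} (I : Ideal (MvPolynomial V k)) (v : V)
    (_ : ℕ) : ↥(Submodule.restrictScalars k I) →ₗ[k] ↥(Submodule.restrictScalars k I) where
  toFun f := ⟨X v * f.1, I.mul_mem_left _ f.2⟩
  map_add' f g := by ext; simp [mul_add]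
  map_smul' c f := by ext; simp [mul_smul_comm]

/-- The `i`-th total Betti number `β_i(I) = dim_k Tor_i^S(k, I)` of a homogeneous ideal of
the polynomial ring, computed as the dimension of ungraded Koszul homology. -/
def totalBetti (k : Type*) [Field k] {V : Type*} [Fintype V] [LinearOrder V]
    (I : Ideal (MvPolynomial V k)) (i : ℕ) : ℕ :=
  bettiAux k (fun _ => ↥(Submodule.restrictScalars k I)) (idealMulTotal I) i (i + 1)

/-- `P = I + J` is a Betti splitting if `β_i(P) = β_i(I) + β_i(J) + β_{i-1}(I ∩ J)`
for all `i ≥ 0` (where `β_{-1} = 0`). -/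
def IsBettiSplitting (k : Type*) [Field k] {V : Type*} [Fintype V] [LinearOrder V]
    (P I J : Ideal (MvPolynomial V k)) : Prop :=
  P = I + J ∧ totalBetti k P 0 = totalBetti k I 0 + totalBetti k J 0 ∧
    ∀ i : ℕ, totalBetti k P (i + 1) =
      totalBetti k I (i + 1) + totalBetti k J (i + 1) + totalBetti k (I ⊓ J) i

/-- The subspace of the degree-`a` homogeneous component of `S` consisting of elements of a
homogeneous ideal `I`. -/
def quotSub (k : Type*) [Field k] {V : Type*} (I : Ideal (MvPolynomial V k)) (a : ℕ) :
    Submodule k ↥(homogeneousSubmodule V k a) :=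
  Submodule.comap (homogeneousSubmodule V k a).subtype (Submodule.restrictScalars k I)

/-- The degree-`a` graded piece of the quotient ring `S/I`. -/
def quotPiece (k : Type*) [Field k] {V : Type*} (I : Ideal (MvPolynomial V k)) (a : ℕ) :
    Type _ :=
  ↥(homogeneousSubmodule V k a) ⧸ quotSub k I a

instance (I : Ideal (MvPolynomial V k)) (a : ℕ) : AddCommGroup (quotPiece k I a) :=
  inferInstanceAs (AddCommGroup (↥(homogeneousSubmodule V k a) ⧸ quotSub k I a))

instance (I : Ideal (MvPolynomial V k)) (a : ℕ) : Module k (quotPiece k I a) :=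
  inferInstanceAs (Module k (↥(homogeneousSubmodule V k a) ⧸ quotSub k I a))

/-- Multiplication by `x_v` on the homogeneous components of `S`. -/
def homogMul (k : Type*) [Field k] {V : Type*} (v : V) (a : ℕ) :
    ↥(homogeneousSubmodule V k a) →ₗ[k] ↥(homogeneousSubmodule V k (a + 1)) where
  toFun f := ⟨X v * f.1, by
    have h2 := (mem_homogeneousSubmodule _ _).mp f.2
    rw [mem_homogeneousSubmodule]
    simpa [add_comm] using (isHomogeneous_X k v).mul h2⟩
  map_add' f g := by ext; simp [mul_add]
  map_smul' c f := by ext; simp [mul_smul_comm]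

/-- Multiplication by `x_v` on graded pieces of the quotient ring `S/I`. -/
def quotMul {k : Type*} [Field k] {V : Type*} (I : Ideal (MvPolynomial V k)) (v : V) (a : ℕ) :
    quotPiece k I a →ₗ[k] quotPiece k I (a + 1) :=
  Submodule.mapQ (quotSub k I a) (quotSub k I (a + 1)) (homogMul k v a)
    (fun _ hx => I.mul_mem_left _ hx)

/-- The Castelnuovo–Mumford regularity `reg(S/I) = sup { j - i | β_{i,j}(S/I) ≠ 0 }` of the
quotient of the polynomial ring by a homogeneous ideal. -/
def regQuot (k : Type*) [Field k] {V : Type*} [Fintype V] [LinearOrder V]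
    (I : Ideal (MvPolynomial V k)) : ℕ :=
  sSup {r | ∃ i, bettiAux k (quotPiece k I) (quotMul I) i (i + r) ≠ 0}

/-! ### Graphs, path ideals and path induced matching numbers -/

/-- `l` is (the vertex list of) a `t`-path of `G`: `t` distinct vertices with consecutive
vertices adjacent. -/
def IsPathList {V : Type*} (G : SimpleGraph V) (t : ℕ) (l : List V) : Prop :=
  l.length = t ∧ l.Nodup ∧ l.Chain' G.Adj

/-- The `t`-path ideal `I_t(G)` of the graph `G`, generated by the monomials
`x_{u_1} ⋯ x_{u_t}` over all `t`-paths `u_1, …, u_t` of `G`. -/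
def pathIdeal (k : Type*) [Field k] {V : Type*} (G : SimpleGraph V) (t : ℕ) :
    Ideal (MvPolynomial V k) :=
  Ideal.span {f | ∃ l : List V, IsPathList G t l ∧ f = (l.map X).prod}

/-- A family of `t`-paths indexed by `Fin n` is a `t`-path induced matching of `G` if the
paths are pairwise vertex-disjoint and the only edges of `G` between vertices of the paths
are the edges of the paths. -/
def IsPathInducedMatching {V : Type*} (G : SimpleGraph V) (t : ℕ) {n : ℕ}
    (P : Fin n → List V) : Prop :=
  (∀ a, IsPathList G t (P a)) ∧
    (∀ a b, a ≠ b → ∀ x, x ∈ P a → x ∉ P b) ∧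
    (∀ x y : V, (∃ a, x ∈ P a) → (∃ b, y ∈ P b) → G.Adj x y →
      ∃ a, [x, y] <:+: P a ∨ [y, x] <:+: P a)

/-- The `t`-path induced matching number `ν_t(G)`: the largest size of a `t`-path induced
matching of `G`. -/
def pathNu {V : Type*} (G : SimpleGraph V) (t : ℕ) : ℕ :=
  sSup {n | ∃ P : Fin n → List V, IsPathInducedMatching G t P}

/-- The induced subgraph of `G` on a set `A` of vertices, viewed as a graph on the same
vertex set (all vertices outside `A` become isolated). -/
def inducedOn {V : Type*} (G : SimpleGraph V) (A : Set V) : SimpleGraph V where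
  Adj x y := G.Adj x y ∧ x ∈ A ∧ y ∈ A
  symm := ⟨fun _ _ ⟨h, hx, hy⟩ => ⟨h.symm, hy, hx⟩⟩
  loopless := ⟨fun _ ⟨h, _, _⟩ => G.irrefl h⟩

/-- The set of neighbors of a set of vertices. -/
def nbhd {V : Type*} (G : SimpleGraph V) (A : Set V) : Set V :=
  {y | ∃ x ∈ A, G.Adj x y}

/-- The closed neighborhood `N[A] = A ∪ N(A)` of a set of vertices. -/
def closedNbhd {V : Type*} (G : SimpleGraph V) (A : Set V) : Set V :=
  A ∪ nbhd G A

/-- A leaf of a graph is a vertex with a unique neighbor. -/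
def IsLeaf {V : Type*} (G : SimpleGraph V) (x : V) : Prop :=
  ∃! y, G.Adj x y

/-- The level of a vertex `y`: its distance to the set of distinguished vertices
(the cycle vertices, resp. the root in the tree case). -/
def levelTo {V : Type*} (G : SimpleGraph V) {m : ℕ} (v : Fin m → V) (y : V) : ℕ :=
  sInf {d | ∃ i, G.dist (v i) y = d}

/-- `v` lists the vertices of a cycle of `G` (in cyclic order). -/
def IsCycleOn {V : Type*} (G : SimpleGraph V) {m : ℕ} [NeZero m] (v : Fin m → V) : Prop :=
  Function.Injective v ∧ ∀ i : Fin m, G.Adj (v i) (v (i + 1))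

/-- Every cycle of `G` has its vertices among `v 0, …, v (m-1)`; together with `IsCycleOn`
this says that the cycle on `v` is the unique cycle of `G`. -/
def UniqueCycle {V : Type*} (G : SimpleGraph V) {m : ℕ} (v : Fin m → V) : Prop :=
  ∀ (x : V) (c : G.Walk x x), c.IsCycle → ∀ y ∈ c.support, y ∈ Set.range v

/-- `G` has at most one cycle: either `G` is a tree (and `m = 1`, `v 0` being a chosen root),
or `G` has the unique cycle `v 0, …, v (m-1)` of length `m ≥ 3`. -/
def AtMostOneCycle {V : Type*} (G : SimpleGraph V) {m : ℕ} [NeZero m] (v : Fin m → V) : Prop :=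
  (m = 1 ∧ G.IsAcyclic) ∨ (3 ≤ m ∧ IsCycleOn G v ∧ UniqueCycle G v)

/-- The graph `Γ_G(C)`: the induced subgraph of `G` obtained by deleting the boundary
`∂(C) = N(C) \ C` of the cycle with vertex set `Cset`. -/
def Gamma {V : Type*} (G : SimpleGraph V) (Cset : Set V) : SimpleGraph V :=
  inducedOn G (nbhd G Cset \ Cset)ᶜ

/-- A graph (containing the cycle with vertex set `Cset`) is `3`-proximal if
`ν_3(G) = ν_3(Γ_G(C))`. -/
def IsProximal3 {V : Type*} (G : SimpleGraph V) (Cset : Set V) : Prop :=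
  pathNu G 3 = pathNu (Gamma G Cset) 3

/-! `I_3(G)` is a monomial ideal, and the colon of a monomial ideal by a variable `x_y` is
generated by its generators with the factor `x_y` (if present) removed. Removing `y` from a
3-path `a, b, c` leaves a product of two distinct neighbours of `y` (if `y = b`), an edge `uw`
with `u ∈ N(y)` and `w ≠ y` (if `y` is an end), or the whole path (if `y` is not on it). In
the last case the path is a multiple of such an edge unless it lies outside `N[y]`, i.e. in
`G_2`. Conversely, `x_y` times a generator `uw` of the first two kinds is the 3-path monomial
of `u, y, w`, resp. `w, u, y`. -/

section MonomialColon

variable {σ R : Type*} [CommSemiring R]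

theorem colon_span_monomial_X (S : Set (σ →₀ ℕ)) (y : σ) :
    (Ideal.span ((fun s => monomial s (1 : R)) '' S)).colon
        (Ideal.span {(X y : MvPolynomial σ R)}) =
      Ideal.span ((fun s => monomial s (1 : R)) '' ((· - Finsupp.single y 1) '' S)) := by
  ext f
  simp only [Ideal.mem_colon_span_singleton, mem_ideal_span_monomial_image, support_mul_X,
    Finset.forall_mem_map, addRightEmbedding_apply, Set.exists_mem_image, tsub_le_iff_right]

theorem monomial_single_add_single (a b : σ) :
    monomial (Finsupp.single a 1 + Finsupp.single b 1) (1 : R) = X a * X b := by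
  rw [monomial_add_single, pow_one]
  rfl

theorem monomial_single_add_single_add_single (a b c : σ) :
    monomial (Finsupp.single a 1 + Finsupp.single b 1 + Finsupp.single c 1) (1 : R) =
      X a * X b * X c := by
  rw [monomial_add_single, monomial_single_add_single, pow_one]

theorem tsub_single_eq_self {s : σ →₀ ℕ} {y : σ} (hy : s y = 0) (n : ℕ) :
    s - Finsupp.single y n = s := by
  ext v
  rcases eq_or_ne v y with rfl | hv
  · simp [hy]
  · simp [hv.symm]

end MonomialColon

section ThreePaths

variable {k : Type*} [Field k] {V : Type*} {G : SimpleGraph V}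

theorem isPathList_three_iff {l : List V} :
    IsPathList G 3 l ↔ ∃ a b c, l = [a, b, c] ∧ G.Adj a b ∧ G.Adj b c ∧ a ≠ c := by
  constructor
  · rintro ⟨hlen, hnd, hch⟩
    obtain ⟨a, b, c, rfl⟩ := List.length_eq_three.mp hlen
    have hch' : List.IsChain G.Adj [a, b, c] := hch
    simp_all [List.isChain_cons_cons]
  · rintro ⟨a, b, c, rfl, hab, hbc, hac⟩
    refine ⟨rfl, by simp [hab.ne, hbc.ne, hac], (?_ : List.IsChain G.Adj [a, b, c])⟩
    simp [List.isChain_cons_cons, hab, hbc]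

theorem pathIdeal_mono {H : SimpleGraph V} (h : G ≤ H) (t : ℕ) :
    pathIdeal k G t ≤ pathIdeal k H t := by
  refine Ideal.span_mono ?_
  rintro _ ⟨l, ⟨hlen, hnd, hch⟩, rfl⟩
  exact ⟨l, ⟨hlen, hnd, hch.imp fun _ _ hadj => h hadj⟩, rfl⟩

theorem inducedOn_le (A : Set V) : inducedOn G A ≤ G :=
  fun _ _ h => h.1

theorem X_mul_X_mul_X_mem_pathIdeal {a b c : V} (hab : G.Adj a b) (hbc : G.Adj b c)
    (hac : a ≠ c) : X a * X b * X c ∈ pathIdeal k G 3 :=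
  Ideal.subset_span ⟨[a, b, c], isPathList_three_iff.mpr ⟨a, b, c, rfl, hab, hbc, hac⟩,
    by simp [mul_assoc]⟩

theorem pathIdeal_three_eq_span_monomial :
    pathIdeal k G 3 = Ideal.span ((fun s => monomial s (1 : k)) ''
      {s | ∃ a b c, G.Adj a b ∧ G.Adj b c ∧ a ≠ c ∧
        s = Finsupp.single a 1 + Finsupp.single b 1 + Finsupp.single c 1}) := by
  unfold pathIdeal
  congr 1
  ext f
  simp only [isPathList_three_iff, Set.mem_ofPred_eq, Set.mem_image]
  constructor
  · rintro ⟨_, ⟨a, b, c, rfl, hab, hbc, hac⟩, rfl⟩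
    exact ⟨_, ⟨a, b, c, hab, hbc, hac, rfl⟩,
      by simp [monomial_single_add_single_add_single, mul_assoc]⟩
  · rintro ⟨_, ⟨a, b, c, hab, hbc, hac, rfl⟩, rfl⟩
    exact ⟨_, ⟨a, b, c, rfl, hab, hbc, hac⟩,
      by simp [monomial_single_add_single_add_single, mul_assoc]⟩

end ThreePaths

def threePathColon (k : Type*) [Field k] {V : Type*} (G : SimpleGraph V) (y : V) :
    Ideal (MvPolynomial V k) :=
  Ideal.span {f : MvPolynomial V k |
      ∃ u w, u ∈ G.neighborSet y ∧ w ∈ G.neighborSet y ∧ u ≠ w ∧ f = X u * X w} +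
    Ideal.span {f : MvPolynomial V k |
      ∃ u w, u ∈ G.neighborSet y ∧ w ∈ G.neighborSet u ∧ w ∉ closedNbhd G {y} ∧
        f = X u * X w} +
    pathIdeal k (inducedOn G (closedNbhd G {y})ᶜ) 3

section ThreePathColon

variable {k : Type*} [Field k] {V : Type*} {G : SimpleGraph V} {y : V}

theorem mem_closedNbhd_singleton {w : V} : w ∈ closedNbhd G {y} ↔ w = y ∨ G.Adj y w := by
  simp [closedNbhd, nbhd]

theorem X_mul_X_mem_threePathColon_of_adj_of_adj {u w : V} (hu : G.Adj y u) (hw : G.Adj y w)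
    (huw : u ≠ w) : X u * X w ∈ threePathColon k G y :=
  Ideal.mem_sup_left (Ideal.mem_sup_left (Ideal.subset_span ⟨u, w, hu, hw, huw, rfl⟩))

theorem X_mul_X_mem_threePathColon {u w : V} (hu : G.Adj y u) (huw : G.Adj u w) (hwy : w ≠ y) :
    X u * X w ∈ threePathColon k G y := by
  by_cases hw : G.Adj y w
  · exact X_mul_X_mem_threePathColon_of_adj_of_adj hu hw huw.ne
  · have hw' : w ∉ closedNbhd G {y} := by simp [mem_closedNbhd_singleton, hwy, hw]
    exact Ideal.mem_sup_left (Ideal.mem_sup_right (Ideal.subset_span ⟨u, w, hu, huw, hw', rfl⟩))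

theorem X_mul_X_mul_X_mem_threePathColon {a b c : V} (hab : G.Adj a b) (hbc : G.Adj b c)
    (hac : a ≠ c) (ha : a ≠ y) (hb : b ≠ y) (hc : c ≠ y) :
    X a * X b * X c ∈ threePathColon k G y := by
  by_cases hyb : G.Adj y b
  · rw [mul_comm (X a)]
    exact Ideal.mul_mem_right _ _ (X_mul_X_mem_threePathColon hyb hab.symm ha)
  by_cases hya : G.Adj y a
  · exact Ideal.mul_mem_right _ _ (X_mul_X_mem_threePathColon hya hab hb)
  by_cases hyc : G.Adj y c
  · rw [show X a * X b * X c = X c * X b * (X a : MvPolynomial V k) by ring]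
    exact Ideal.mul_mem_right _ _ (X_mul_X_mem_threePathColon hyc hbc.symm hb)
  have hout : ∀ v, v ≠ y → ¬ G.Adj y v → v ∈ (closedNbhd G {y})ᶜ := fun v hv hyv => by
    simp [mem_closedNbhd_singleton, hv, hyv]
  exact Ideal.mem_sup_right (X_mul_X_mul_X_mem_pathIdeal
    ⟨hab, hout a ha hya, hout b hb hyb⟩ ⟨hbc, hout b hb hyb, hout c hc hyc⟩ hac)

theorem monomial_tsub_single_mem_threePathColon {a b c : V} (hab : G.Adj a b) (hbc : G.Adj b c)
    (hac : a ≠ c) :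
    monomial (Finsupp.single a 1 + Finsupp.single b 1 + Finsupp.single c 1 - Finsupp.single y 1)
      (1 : k) ∈ threePathColon k G y := by
  by_cases hya : y = a
  · subst hya
    rw [add_assoc, add_tsub_cancel_left, monomial_single_add_single]
    exact X_mul_X_mem_threePathColon hab hbc hac.symm
  by_cases hyb : y = b
  · subst hyb
    rw [add_right_comm, add_tsub_cancel_right, monomial_single_add_single]
    exact X_mul_X_mem_threePathColon_of_adj_of_adj hab.symm hbc hac
  by_cases hyc : y = c
  · subst hyc
    rw [add_tsub_cancel_right, monomial_single_add_single, mul_comm]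
    exact X_mul_X_mem_threePathColon hbc.symm hab.symm hac
  rw [tsub_single_eq_self (by simp [hya, hyb, hyc]),
    monomial_single_add_single_add_single]
  exact X_mul_X_mul_X_mem_threePathColon hab hbc hac (Ne.symm hya) (Ne.symm hyb) (Ne.symm hyc)

theorem threePathColon_le_colon :
    threePathColon k G y ≤ (pathIdeal k G 3).colon (Ideal.span {(X y : MvPolynomial V k)}) := by
  refine sup_le (sup_le ?_ ?_) ((pathIdeal_mono (inducedOn_le _) 3).trans Ideal.le_colon)
  · rw [Ideal.span_le]
    rintro _ ⟨u, w, hu, hw, huw, rfl⟩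
    rw [SetLike.mem_coe, Ideal.mem_colon_span_singleton,
      show X u * X w * X y = X u * X y * (X w : MvPolynomial V k) by ring]
    exact X_mul_X_mul_X_mem_pathIdeal (G.adj_symm hu) hw huw
  · rw [Ideal.span_le]
    rintro _ ⟨u, w, hu, hw, hw_out, rfl⟩
    rw [SetLike.mem_coe, Ideal.mem_colon_span_singleton,
      show X u * X w * X y = X w * X u * (X y : MvPolynomial V k) by ring]
    exact X_mul_X_mul_X_mem_pathIdeal (G.adj_symm hw) (G.adj_symm hu)
      (fun h => hw_out (mem_closedNbhd_singleton.mpr (Or.inl h)))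

end ThreePathColon

/-- **Lemma (colon of a 3-path ideal by a vertex).**
Let `G` be a finite simple graph and `y` a vertex of `G`.  Then
`I_3(G) : y = (uv : u ≠ v ∈ N(y)) + (uw : u ∈ N(y), w ∈ N(u) \ N[y]) + I_3(G_2)`,
where `G_2` is the induced subgraph of `G` on `V(G) \ N[y]`. -/
theorem pathIdeal_three_colon_vertex
    (k : Type*) [Field k] {V : Type*}
    (G : SimpleGraph V) (y : V) :
    Submodule.colon (pathIdeal k G 3) (Ideal.span {(X y : MvPolynomial V k)}) =
      Ideal.span {f : MvPolynomial V k |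
          ∃ u w, u ∈ G.neighborSet y ∧ w ∈ G.neighborSet y ∧ u ≠ w ∧ f = X u * X w} +
        Ideal.span {f : MvPolynomial V k |
          ∃ u w, u ∈ G.neighborSet y ∧ w ∈ G.neighborSet u ∧ w ∉ closedNbhd G {y} ∧
            f = X u * X w} +
        pathIdeal k (inducedOn G (closedNbhd G {y})ᶜ) 3 := by
  refine le_antisymm ?_ threePathColon_le_colon
  rw [pathIdeal_three_eq_span_monomial, colon_span_monomial_X, Ideal.span_le]
  rintro _ ⟨_, ⟨_, ⟨a, b, c, hab, hbc, hac, rfl⟩, rfl⟩, rfl⟩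
  exact monomial_tsub_single_mem_threePathColon hab hbc hac

end PathIdeals
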